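/- arXiv:2602.07171 — 6 statements merged into one kernel-verified Lean document; each statement's English description precedes it below -/
import Mathlib

section
/- Let v be a positive integer with gcd(v, 6) = 1. Then the absolute value of the resultant of Φ₆(t) = t² - t + 1 and t^v + 1 equals 3. -/
open Polynomial

/-- The Sylvester matrix of two integer polynomials. -/
noncomputable def sylvester (f g : Polynomial ℤ) :
    Matrix (Fin (f.natDegree + g.natDegree)) (Fin (f.natDegree + g.natDegree)) ℤ :=
  Matrix.of fun i j =>
    if (i : ℕ) < g.natDegree then
      (if (i : ℕ) ≤ (j : ℕ) then f.coeff ((j : ℕ) - (i : ℕ)) else 0)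
    else
      (if (i : ℕ) - g.natDegree ≤ (j : ℕ) then
        g.coeff ((j : ℕ) - ((i : ℕ) - g.natDegree)) else 0)

/-- The resultant of two integer polynomials, as the determinant of the Sylvester matrix. -/
noncomputable def res (f g : Polynomial ℤ) : ℤ :=
  (_root_.sylvester f g).det

/-!
`sylvester f g` is the transpose of Mathlib's Sylvester matrix of `(g, f)`, so `res f g` is
`± resultant f g`. For monic `f` the resultant `resultant f g` only depends on `g` modulo `f`.
Modulo `Φ₆ = X ^ 2 - X + 1` we have `X ^ 6 ≡ 1`, so for `v ≡ 1, 5 (mod 6)` the polynomial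
`X ^ v + 1` reduces to `X + 1` resp. `-(X - 2)`, and `Res(Φ₆, X - a) = Φ₆(a)` gives
`Φ₆(-1) = Φ₆(2) = 3`.
-/

open Matrix

theorem res_eq_resultant_swap (f g : ℤ[X]) : res f g = g.resultant f := by
  have hshift {p : ℤ[X]} {a j : ℕ} :
      (if a ≤ j ∧ j ≤ a + p.natDegree then p.coeff (j - a) else 0) =
        if a ≤ j then p.coeff (j - a) else 0 := by
    split_ifs <;> first | rfl | omega | exact (coeff_eq_zero_of_natDegree_lt (by omega)).symm
  let e : Fin (g.natDegree + f.natDegree) ≃ Fin (f.natDegree + g.natDegree) :=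
    finCongr (add_comm _ _)
  have hsyl :
      (g.sylvester f g.natDegree f.natDegree)ᵀ = (_root_.sylvester f g).submatrix e e := by
    ext i j
    induction i using Fin.addCases with
    | left i =>
      simp only [Polynomial.sylvester, _root_.sylvester, e, transpose_apply, of_apply,
        submatrix_apply, Fin.addCases_left, finCongr_apply, Fin.val_cast, Fin.val_castAdd,
        Set.mem_Icc, i.isLt, if_true]
      exact hshift
    | right i =>
      simp only [Polynomial.sylvester, _root_.sylvester, e, transpose_apply, of_apply,
        submatrix_apply, Fin.addCases_right, finCongr_apply, Fin.val_cast, Fin.val_natAdd,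
        Set.mem_Icc, add_lt_iff_neg_left, Nat.not_lt_zero, if_false, Nat.add_sub_cancel_left]
      exact hshift
  rw [res, resultant, ← det_transpose (g.sylvester _ _ _), hsyl, det_submatrix_equiv_self]

namespace Polynomial

variable {R : Type*} [CommRing R] {f g h : R[X]} {k n : ℕ}

theorem resultant_modByMonic (hf : f.Monic) (hg : g.natDegree ≤ n) :
    resultant f (g %ₘ f) f.natDegree n = resultant f g f.natDegree n := by
  nontriviality R
  rcases lt_or_ge g.natDegree f.natDegree with hlt | hle
  · rw [(modByMonic_eq_self_iff hf).mpr (degree_lt_degree hlt)]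
  · conv_rhs => rw [← modByMonic_add_div g f]
    refine (resultant_add_mul_right _ _ _ _ _ ?_ le_rfl).symm
    rw [natDegree_divByMonic g hf]
    omega

theorem resultant_eq_of_dvd_sub (hf : f.Monic) (hfgh : f ∣ g - h) (hg : g.natDegree ≤ n)
    (hh : h.natDegree ≤ n) : resultant f g f.natDegree n = resultant f h f.natDegree n := by
  rw [← resultant_modByMonic hf hg, ← resultant_modByMonic hf hh,
    modByMonic_eq_of_dvd_sub hf hfgh]

theorem Monic.resultant_eq_of_natDegree_le (hf : f.Monic) (hg : g.natDegree ≤ k) (hkn : k ≤ n) :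
    resultant f g f.natDegree n = resultant f g f.natDegree k := by
  obtain ⟨d, rfl⟩ := Nat.exists_eq_add_of_le hkn
  rw [resultant_add_right_deg _ _ _ _ _ hg, hf.coeff_natDegree, one_pow, one_mul]

end Polynomial

theorem X_sq_sub_X_add_one_dvd_X_pow_sub_X_pow_mod_six {R : Type*} [CommRing R] (n : ℕ) :
    (X ^ 2 - X + 1 : R[X]) ∣ X ^ n - X ^ (n % 6) := by
  have hsix : (X ^ 2 - X + 1 : R[X]) ∣ X ^ 6 - 1 := ⟨(X + 1) * (X ^ 3 - 1), by ring⟩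
  have hpow : (X ^ 6 - 1 : R[X]) ∣ (X ^ 6) ^ (n / 6) - 1 := by
    simpa using sub_dvd_pow_sub_pow (X ^ 6 : R[X]) 1 (n / 6)
  calc (X ^ 2 - X + 1 : R[X]) ∣ ((X ^ 6) ^ (n / 6) - 1) * X ^ (n % 6) :=
        (hsix.trans hpow).mul_right _
    _ = X ^ n - X ^ (n % 6) := by
        rw [← pow_mul, sub_mul, ← pow_add, Nat.div_add_mod, one_mul]

theorem Nat.mod_six_eq_one_or_five_of_coprime {v : ℕ} (hv : v.Coprime 6) :
    v % 6 = 1 ∨ v % 6 = 5 := by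
  rw [Nat.Coprime, Nat.gcd_comm, Nat.gcd_rec] at hv
  have : v % 6 < 6 := Nat.mod_lt _ (by norm_num)
  interval_cases h : v % 6 <;> simp_all

theorem resultant_X_sq_sub_X_add_one_X_pow_add_one {R : Type*} [CommRing R] [Nontrivial R]
    {v : ℕ} (hv : v.Coprime 6) : resultant (X ^ 2 - X + 1 : R[X]) (X ^ v + 1) = 3 := by
  have hf : (X ^ 2 - X + 1 : R[X]).Monic := by monicity!
  have hfdeg : (X ^ 2 - X + 1 : R[X]).natDegree = 2 := by compute_degree!
  have hgdeg : (X ^ v + 1 : R[X]).natDegree = v := by rw [← C_1, natDegree_X_pow_add_C]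
  have hmod := Nat.mod_six_eq_one_or_five_of_coprime hv
  have hv1 : 1 ≤ v := by omega
  have reduce (r : R[X]) (hr : r.natDegree ≤ 1) (hdvd : X ^ 2 - X + 1 ∣ X ^ (v % 6) + 1 - r) :
      resultant (X ^ 2 - X + 1 : R[X]) (X ^ v + 1) = resultant (X ^ 2 - X + 1) r 2 1 := by
    have hsub : X ^ 2 - X + 1 ∣ X ^ v + 1 - r := by
      convert dvd_add (X_sq_sub_X_add_one_dvd_X_pow_sub_X_pow_mod_six v) hdvd using 1
      ring
    rw [hgdeg, resultant_eq_of_dvd_sub hf hsub hgdeg.le (hr.trans hv1),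
      hf.resultant_eq_of_natDegree_le hr hv1, hfdeg]
  rcases hmod with h | h
  · rw [reduce (X + C 1) (natDegree_X_add_C _).le (by simp [h]),
      resultant_X_add_C_right _ _ _ hfdeg.le]
    norm_num
  · have hdvd : X ^ 2 - X + 1 ∣ X ^ (v % 6) + 1 - C (-1) * (X - C 2 : R[X]) :=
      ⟨X ^ 3 + X ^ 2 - 1, by
        rw [h, map_neg, map_one, show (C 2 : R[X]) = 2 from map_ofNat C 2]; ring⟩
    rw [reduce _ (by compute_degree) hdvd, resultant_C_mul_right,
      resultant_X_sub_C_right _ _ _ hfdeg.le]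
    norm_num

theorem stmt_5_general (v : ℕ) (hgcd : Nat.gcd v 6 = 1) :
    |res (X ^ 2 - X + 1) (X ^ v + 1)| = 3 := by
  rw [res_eq_resultant_swap, resultant_comm, abs_mul, abs_pow, abs_neg, abs_one, one_pow, one_mul,
    resultant_X_sq_sub_X_add_one_X_pow_add_one hgcd]
  norm_num

theorem stmt_5 (v : ℕ) (hv : 0 < v) (hgcd : Nat.gcd v 6 = 1) :
    |res (X ^ 2 - X + 1) (X ^ v + 1)| = 3 :=
  stmt_5_general v hgcd
end

section
/- Let n be a positive integer divisible by 6 and let ζ be a primitive sixth root of unity in ℂ. Define G(t) = (t^n - 1)/Φ₆(t) ∈ ℤ[t]. Then G(ζ)·G(ζ̄) = n²/3. -/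
/-!
Differentiating `(t² - t + 1) G = tⁿ - 1` at a root `ω` of `Φ₆` kills the term containing `G'`
and leaves `(2ω - 1) G(ω) = n ω^(n-1)`. Since `ζ̄ = ζ⁻¹ = 1 - ζ`, the two instances `ω = ζ, ζ̄`
multiply to `(2ζ - 1)(1 - 2ζ) G(ζ) G(ζ̄) = n² (ζ ζ̄)^(n-1) = n²`, and
`(2ζ - 1)(1 - 2ζ) = 3 - 4 Φ₆(ζ) = 3`.
-/

open Polynomial

theorem Polynomial.aeval_derivative_mul_of_aeval_eq_zero {R A : Type*} [CommSemiring R]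
    [CommSemiring A] [Algebra R A] {p : R[X]} {x : A} (hx : aeval x p = 0) (q : R[X]) :
    aeval x (derivative (p * q)) = aeval x (derivative p) * aeval x q := by
  rw [derivative_mul, map_add, map_mul, map_mul, hx, zero_mul, add_zero]

theorem IsPrimitiveRoot.sq_sub_self_add_one_eq_zero {A : Type*} [CommRing A] [IsDomain A]
    {ζ : A} (hζ : IsPrimitiveRoot ζ 6) : ζ ^ 2 - ζ + 1 = 0 := by
  simpa [cyclotomic_six] using hζ.isRoot_cyclotomic (by norm_num)

theorem IsPrimitiveRoot.conj_eq_one_sub {ζ : ℂ} (hζ : IsPrimitiveRoot ζ 6) :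
    starRingEnd ℂ ζ = 1 - ζ := by
  rw [← Complex.inv_eq_conj (hζ.norm'_eq_one (by norm_num))]
  exact inv_eq_of_mul_eq_one_right (by linear_combination -hζ.sq_sub_self_add_one_eq_zero)

theorem IsPrimitiveRoot.two_mul_sub_one_mul_aeval_eq {R A : Type*} [CommRing R] [CommRing A]
    [IsDomain A] [Algebra R A] {n : ℕ} {G : R[X]} (hG : (X ^ 2 - X + 1) * G = X ^ n - 1)
    {ω : A} (hω : IsPrimitiveRoot ω 6) :
    (2 * ω - 1) * aeval ω G = n * ω ^ (n - 1) := by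
  have hroot : aeval ω (X ^ 2 - X + 1 : R[X]) = 0 := by
    simpa using hω.sq_sub_self_add_one_eq_zero
  have h := aeval_derivative_mul_of_aeval_eq_zero hroot G
  rw [hG] at h
  simp only [derivative_X_pow, derivative_X, derivative_one, sub_zero, add_zero, map_add, map_sub,
    map_mul, map_pow, map_one, map_natCast, aeval_X] at h
  linear_combination -h

theorem stmt_7_general (n : ℕ) (ζ : ℂ)
    (hζ : IsPrimitiveRoot ζ 6) (G : Polynomial ℤ)
    (hG : (X ^ 2 - X + 1) * G = X ^ n - 1) :
    (aeval ζ G) * (aeval (starRingEnd ℂ ζ) G) = (n : ℂ) ^ 2 / 3 := by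
  have hζ' := hζ.two_mul_sub_one_mul_aeval_eq hG
  have hconj := (hζ.map_of_injective (starRingEnd ℂ).injective).two_mul_sub_one_mul_aeval_eq hG
  rw [hζ.conj_eq_one_sub] at hconj ⊢
  have hsq := hζ.sq_sub_self_add_one_eq_zero
  have hunit : ζ ^ (n - 1) * (1 - ζ) ^ (n - 1) = 1 := by
    rw [← mul_pow, show ζ * (1 - ζ) = 1 by linear_combination -hsq, one_pow]
  rw [eq_div_iff three_ne_zero]
  linear_combination (1 - 2 * ζ) * aeval (1 - ζ) G * hζ' + n * ζ ^ (n - 1) * hconj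
    + n ^ 2 * hunit + 4 * aeval ζ G * aeval (1 - ζ) G * hsq

theorem stmt_7 (n : ℕ) (hn : 0 < n) (h6 : 6 ∣ n) (ζ : ℂ)
    (hζ : IsPrimitiveRoot ζ 6) (G : Polynomial ℤ)
    (hG : (X ^ 2 - X + 1) * G = X ^ n - 1) :
    (aeval ζ G) * (aeval (starRingEnd ℂ ζ) G) = (n : ℂ) ^ 2 / 3 :=
  stmt_7_general n ζ hζ G hG
end

section
/- Let n ≥ 1, m ≥ 1, and K = gcd(m-2, n). Suppose 6 ∣ K, 2K ∣ n, and m ≡ K + 2 (mod 2K). Then, up to sign, 2 + L_K divides Res(t^m - t + 1, G(t)), where G(t) = (t^n - 1)/Φ₆(t) and L_K is the K-th Lucas number. -/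
/-!
Work in `ℤ[φ]`, `φ` the golden ratio, and evaluate at `β = -φ`, so that `β² = 1 - β` and, `K` being
even, `β ^ K = φ ^ K`. Put `ε = φ ^ K + 1`. Writing `m = K (2r + 1) + 2`, the trinomial gives
`β ^ m - β + 1 = β² ((φ ^ K) ^ (2r + 1) + 1)`, a multiple of `ε`. Next `Φ₆(β) = 2β²` and
`β ^ n - 1 = (φ ^ 2K) ^ s - 1` is a multiple of `φ ^ 2K - 1 = ε (φ ^ K - 1)`, where
`2 ∣ φ ^ K - 1` because `3 ∣ K` and `φ³ - 1 = 2φ`; hence `ε ∣ G(β)`. Conjugating, `ε̄` divides both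
polynomials at `β̄`. The Sylvester matrix sends the columns `(x ^ j)` for `x = β, β̄` to multiples of
`ε` and `ε̄`; substituting them for two columns of the matrix gives `ε ε̄ ∣ (β̄ - β) Res = √5 Res`.
Finally `ε ε̄ = 2 + φ ^ K + φ̄ ^ K = 2 + L_K` is a rational integer, so comparing rational parts
gives `2 + L_K ∣ Res`.
-/

open Polynomial

/-- The Lucas numbers: `L₀ = 2`, `L₁ = 1`, `L_{k+2} = L_{k+1} + L_k`. -/
def lucas : ℕ → ℤ
  | 0 => 2
  | 1 => 1
  | n + 2 => lucas (n + 1) + lucas n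

namespace Matrix

variable {n R : Type*} [Fintype n] [DecidableEq n] [CommRing R]

theorem det_updateCol_mulVec_self (M : Matrix n n R) (j : n) (v : n → R) :
    (M.updateCol j (M *ᵥ v)).det = v j * M.det := by
  have hcols : M *ᵥ v = fun k => ∑ i, v i • M k i := by
    ext k; simp [mulVec, dotProduct, mul_comm]
  rw [hcols, det_updateCol_sum, smul_eq_mul]

theorem updateCol_mulVec_of_eq_zero (M : Matrix n n R) {j : n} (u : n → R) {v : n → R}
    (hv : v j = 0) : M.updateCol j u *ᵥ v = M *ᵥ v := by
  ext k
  refine Finset.sum_congr rfl fun i _ => ?_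
  by_cases hi : i = j
  · subst hi; simp [hv]
  · simp [updateCol_ne hi]

theorem mulVec_eq_mulVec_update_add (M : Matrix n n R) (j : n) (v : n → R) :
    M *ᵥ v = M *ᵥ Function.update v j 0 + v j • fun k => M k j := by
  have hv : v = Function.update v j 0 + v j • Pi.single j 1 := by
    ext i; by_cases h : i = j <;> simp [h]
  conv_lhs => rw [hv]
  rw [mulVec_add, mulVec_smul, mulVec_single_one]
  rfl

theorem det_updateCol_mulVec_updateCol_mulVec (M : Matrix n n R) {p q : n} (hpq : p ≠ q)
    (v w : n → R) :
    ((M.updateCol p (M *ᵥ v)).updateCol q (M *ᵥ w)).det = (v p * w q - v q * w p) * M.det := by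
  -- Split `w` at `p`: the part vanishing at `p` only sees `M₁`, and the column `p` of `M` is
  -- handled by swapping the columns `p` and `q`.
  set M₁ := M.updateCol p (M *ᵥ v)
  have hswap : (M₁.updateCol q fun k => M k p).submatrix id (Equiv.swap p q)
      = M.updateCol q (M *ᵥ v) := by
    ext k j
    rcases eq_or_ne j p with rfl | hjp
    · simp [M₁, updateCol_ne hpq]
    rcases eq_or_ne j q with rfl | hjq
    · simp [M₁, updateCol_ne hpq]
    · simp [M₁, Equiv.swap_apply_of_ne_of_ne hjp hjq, updateCol_ne hjp, updateCol_ne hjq]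
  have hcross : (M₁.updateCol q fun k => M k p).det = -(v q * M.det) := by
    rw [← det_updateCol_mulVec_self, ← hswap, det_permute', Equiv.Perm.sign_swap hpq]
    simp
  rw [mulVec_eq_mulVec_update_add M p w, det_updateCol_add, det_updateCol_smul,
    ← updateCol_mulVec_of_eq_zero M (M *ᵥ v) (Function.update_self p 0 w),
    det_updateCol_mulVec_self, det_updateCol_mulVec_self, hcross,
    Function.update_of_ne hpq.symm]
  ring

end Matrix

section Sylvester

open Matrix

variable {R : Type*} [CommRing R]

theorem sum_ite_le_coeff_mul_pow (p : ℤ[X]) (x : R) {N i : ℕ} (h : p.natDegree + i < N) :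
    ∑ j : Fin N, (if i ≤ (j : ℕ) then (p.coeff ((j : ℕ) - i) : R) else 0) * x ^ (j : ℕ)
      = x ^ i * aeval x p := by
  obtain ⟨k, rfl⟩ := Nat.exists_eq_add_of_lt h
  rw [Fin.sum_univ_eq_sum_range (fun j => (if i ≤ j then (p.coeff (j - i) : R) else 0) * x ^ j),
    show p.natDegree + i + k + 1 = i + (p.natDegree + k + 1) by ring, Finset.sum_range_add,
    aeval_eq_sum_range' (n := p.natDegree + k + 1) (by omega), Finset.mul_sum]
  rw [Finset.sum_eq_zero fun j hj => by rw [if_neg (by simpa using hj), zero_mul], zero_add]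
  refine Finset.sum_congr rfl fun j _ => ?_
  rw [if_pos (by omega), Nat.add_sub_cancel_left, pow_add, zsmul_eq_mul]
  ring

theorem sylvester_map_mulVec_pow (f g : ℤ[X]) (x : R) (i : Fin (f.natDegree + g.natDegree)) :
    ((_root_.sylvester f g).map (Int.cast : ℤ → R) *ᵥ fun j => x ^ (j : ℕ)) i =
      if (i : ℕ) < g.natDegree then x ^ (i : ℕ) * aeval x f
      else x ^ ((i : ℕ) - g.natDegree) * aeval x g := by
  have hi := i.isLt
  simp only [mulVec, dotProduct, Matrix.map_apply, _root_.sylvester, Matrix.of_apply,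
    apply_ite (Int.cast : ℤ → R), Int.cast_zero]
  split_ifs with hig
  · exact sum_ite_le_coeff_mul_pow f x (by omega)
  · exact sum_ite_le_coeff_mul_pow g x (by omega)

theorem mul_dvd_sub_mul_res (f g : ℤ[X]) (hdeg : 2 ≤ f.natDegree + g.natDegree) {x y d e : R}
    (hfx : d ∣ aeval x f) (hgx : d ∣ aeval x g) (hfy : e ∣ aeval y f) (hgy : e ∣ aeval y g) :
    d * e ∣ (y - x) * (res f g : R) := by
  set S := (_root_.sylvester f g).map (Int.cast : ℤ → R)
  have hdet : S.det = res f g := (RingHom.map_det (Int.castRingHom R) _).symm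
  have hdvd : ∀ {z c : R}, c ∣ aeval z f → c ∣ aeval z g →
      ∀ i, c ∣ (S *ᵥ fun j => z ^ (j : ℕ)) i := by
    intro z c hf hg i
    rw [sylvester_map_mulVec_pow]
    split_ifs
    · exact dvd_mul_of_dvd_right hf _
    · exact dvd_mul_of_dvd_right hg _
  choose a ha using hdvd hfx hgx
  choose b hb using hdvd hfy hgy
  have hpq : (⟨0, by omega⟩ : Fin (f.natDegree + g.natDegree)) ≠ ⟨1, by omega⟩ := by simp
  have key :=
    S.det_updateCol_mulVec_updateCol_mulVec hpq (fun j => x ^ (j : ℕ)) fun j => y ^ (j : ℕ)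
  rw [show (S *ᵥ fun j => x ^ (j : ℕ)) = d • a from funext ha,
    show (S *ᵥ fun j => y ^ (j : ℕ)) = e • b from funext hb, det_updateCol_smul,
    updateCol_comm _ hpq, det_updateCol_smul, hdet] at key
  exact ⟨_, by simpa [mul_assoc, mul_left_comm] using key.symm⟩

end Sylvester

section StarRing

variable {A : Type*} [CommRing A] [StarRing A]

theorem aeval_star (x : A) (p : ℤ[X]) : aeval (star x) p = star (aeval x p) :=
  aeval_algHom_apply (starRingEnd A).toIntAlgHom x p

theorem star_dvd_aeval_star {x d : A} {p : ℤ[X]} (h : d ∣ aeval x p) :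
    star d ∣ aeval (star x) p := by
  rw [aeval_star]
  exact map_dvd (starRingEnd A) h

end StarRing

theorem eq_of_two_mul_eq_two_mul {A : Type*} [Ring A] [Module.IsTorsionFree ℤ A] {z w : A}
    (h : 2 * z = 2 * w) : z = w := by
  refine smul_right_injective A (two_ne_zero : (2 : ℤ) ≠ 0) ?_
  simpa only [two_zsmul, ← two_mul] using h

section GoldenRatio

open QuadraticAlgebra

-- `ω * ω = 1 + ω`: `ω` is the golden ratio and `star` its Galois conjugate `1 - ω`.
local notation "ℤ[φ]" => QuadraticAlgebra ℤ 1 1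

theorem omega_mul_omega_eq_omega_add_one : (ω : ℤ[φ]) * ω = ω + 1 := by
  ext <;> simp

theorem star_omega_eq_one_sub_omega : star (ω : ℤ[φ]) = 1 - ω := by
  ext <;> simp

theorem omega_mul_star_omega : (ω : ℤ[φ]) * star ω = -1 := by
  ext <;> simp

theorem omega_pow_add_star_omega_pow (k : ℕ) : (ω : ℤ[φ]) ^ k + star (ω : ℤ[φ]) ^ k = lucas k := by
  have hω := omega_mul_omega_eq_omega_add_one
  have hω' : star (ω : ℤ[φ]) * star ω = star ω + 1 := by
    rw [star_omega_eq_one_sub_omega]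
    linear_combination hω
  induction k using Nat.twoStepInduction with
  | zero => norm_num [lucas]
  | one => rw [star_omega_eq_one_sub_omega]; norm_num [lucas]
  | more k ih₀ ih₁ =>
    rw [lucas, Int.cast_add, ← ih₀, ← ih₁]
    linear_combination (ω : ℤ[φ]) ^ k * hω + star (ω : ℤ[φ]) ^ k * hω'

theorem two_dvd_omega_pow_sub_one {k : ℕ} (hk : 3 ∣ k) : (2 : ℤ[φ]) ∣ ω ^ k - 1 := by
  obtain ⟨j, rfl⟩ := hk
  have hω₃ : (ω : ℤ[φ]) ^ 3 - 1 = 2 * ω := by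
    linear_combination (ω + 1 : ℤ[φ]) * omega_mul_omega_eq_omega_add_one
  calc (2 : ℤ[φ]) ∣ ω ^ 3 - 1 := ⟨ω, hω₃⟩
    _ ∣ (ω ^ 3) ^ j - 1 ^ j := sub_dvd_pow_sub_pow _ _ _
    _ = ω ^ (3 * j) - 1 := by rw [one_pow, pow_mul]

theorem isUnit_omega : IsUnit (ω : ℤ[φ]) :=
  IsUnit.of_mul_eq_one (ω - 1) (by linear_combination omega_mul_omega_eq_omega_add_one)

theorem omega_pow_add_one_dvd_aeval_neg_omega_trinomial {K : ℕ} (hK : Even K) (r : ℕ) :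
    (ω ^ K + 1 : ℤ[φ]) ∣ aeval (-ω : ℤ[φ]) (X ^ (K * (2 * r + 1) + 2) - X + 1 : ℤ[X]) := by
  have hodd : Odd (2 * r + 1) := odd_two_mul_add_one r
  have heval : aeval (-ω : ℤ[φ]) (X ^ (K * (2 * r + 1) + 2) - X + 1 : ℤ[X])
      = ω ^ 2 * ((ω ^ K) ^ (2 * r + 1) + 1 ^ (2 * r + 1)) := by
    simp only [map_add, map_sub, map_pow, aeval_X, map_one]
    rw [pow_add, pow_mul, hK.neg_pow, even_two.neg_pow, one_pow]
    linear_combination -omega_mul_omega_eq_omega_add_one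
  rw [heval]
  exact dvd_mul_of_dvd_right (hodd.add_dvd_pow_add_pow _ _) _

theorem omega_pow_add_one_dvd_aeval_neg_omega {K : ℕ} (hK₂ : Even K) (hK₃ : 3 ∣ K) (s : ℕ)
    {G : ℤ[X]} (hG : (X ^ 2 - X + 1) * G = X ^ (2 * K * s) - 1) :
    (ω ^ K + 1 : ℤ[φ]) ∣ aeval (-ω : ℤ[φ]) G := by
  obtain ⟨c, hc⟩ := two_dvd_omega_pow_sub_one hK₃
  have heval : (2 * (ω ^ 2 * aeval (-ω) G) : ℤ[φ]) = ((ω ^ K) ^ 2) ^ s - 1 := by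
    have := congrArg (aeval (-ω : ℤ[φ])) hG
    simp only [map_mul, map_add, map_sub, map_pow, aeval_X, map_one] at this
    rw [mul_comm 2 K, pow_mul, pow_mul, hK₂.neg_pow] at this
    rw [← this]
    linear_combination aeval (-ω) G * omega_mul_omega_eq_omega_add_one
  have hdvd : (2 * (ω ^ K + 1) : ℤ[φ]) ∣ 2 * (ω ^ 2 * aeval (-ω) G) := by
    rw [heval]
    calc (2 * (ω ^ K + 1) : ℤ[φ]) ∣ (ω ^ K) ^ 2 - 1 :=
          ⟨c, by linear_combination (ω ^ K + 1 : ℤ[φ]) * hc⟩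
      _ ∣ ((ω ^ K) ^ 2) ^ s - 1 := by simpa using sub_dvd_pow_sub_pow ((ω ^ K : ℤ[φ]) ^ 2) 1 s
  obtain ⟨z, hz⟩ := hdvd
  have hz' : (ω ^ 2 * aeval (-ω) G : ℤ[φ]) = (ω ^ K + 1) * z :=
    eq_of_two_mul_eq_two_mul (by rw [hz]; ring)
  exact (isUnit_omega.pow 2).dvd_mul_left.mp ⟨z, hz'⟩

theorem omega_pow_add_one_mul_star {K : ℕ} (hK : Even K) :
    (ω ^ K + 1 : ℤ[φ]) * star (ω ^ K + 1) = 2 + lucas K := by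
  rw [star_add, star_pow, star_one, ← omega_pow_add_star_omega_pow]
  have hnorm : (ω : ℤ[φ]) ^ K * star ω ^ K = 1 := by
    rw [← mul_pow, omega_mul_star_omega, hK.neg_one_pow]
  linear_combination hnorm

theorem dvd_of_intCast_dvd_star_neg_omega_sub_mul {r z : ℤ}
    (h : (r : ℤ[φ]) ∣ (star (-ω) - -ω : ℤ[φ]) * (z : ℤ[φ])) : r ∣ z := by
  rw [← eq_intCast (algebraMap ℤ ℤ[φ]), algebraMap_dvd_iff] at h
  simpa using h.1

end GoldenRatio

theorem exists_eq_mul_odd_add_two {m K : ℕ} (hK : K = 0 ∨ 2 < K) (h : m ≡ K + 2 [MOD 2 * K]) :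
    ∃ r, m = K * (2 * r + 1) + 2 := by
  have hmod : m % (2 * K) = K + 2 := by
    rw [show m % (2 * K) = (K + 2) % (2 * K) from h]
    rcases hK with rfl | hK
    · simp
    · exact Nat.mod_eq_of_lt (by omega)
  exact ⟨m / (2 * K), by linear_combination (Nat.div_add_mod m (2 * K)).symm + hmod⟩

theorem stmt_11_general (n m K : ℕ) (h6 : 6 ∣ K) (h2K : 2 * K ∣ n)
    (hmod : m ≡ K + 2 [MOD 2 * K]) (G : Polynomial ℤ)
    (hG : (X ^ 2 - X + 1) * G = X ^ n - 1) :
    (2 + lucas K) ∣ res (X ^ m - X + 1) G := by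
  obtain ⟨k, hk⟩ := h6
  have hK₂ : Even K := ⟨3 * k, by omega⟩
  have hK₃ : 3 ∣ K := ⟨2 * k, by omega⟩
  obtain ⟨r, rfl⟩ := exists_eq_mul_odd_add_two (by omega) hmod
  obtain ⟨s, rfl⟩ := h2K
  have hdeg : 2 ≤ (X ^ (K * (2 * r + 1) + 2) - X + 1 : ℤ[X]).natDegree + G.natDegree := by
    have hcoeff : (X ^ (K * (2 * r + 1) + 2) - X + 1 : ℤ[X]).coeff (K * (2 * r + 1) + 2) ≠ 0 := by
      simp [coeff_X, coeff_one]
    have := le_natDegree_of_ne_zero hcoeff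
    omega
  have hf := omega_pow_add_one_dvd_aeval_neg_omega_trinomial hK₂ r
  have hg := omega_pow_add_one_dvd_aeval_neg_omega hK₂ hK₃ s hG
  have key := mul_dvd_sub_mul_res _ G hdeg hf hg (star_dvd_aeval_star hf) (star_dvd_aeval_star hg)
  rw [omega_pow_add_one_mul_star hK₂] at key
  exact dvd_of_intCast_dvd_star_neg_omega_sub_mul (by exact_mod_cast key)

theorem stmt_11 (n m K : ℕ) (hn : 1 ≤ n) (hm : 1 ≤ m)
    (hK : K = Nat.gcd (m - 2) n) (h6 : 6 ∣ K) (h2K : 2 * K ∣ n)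
    (hmod : m ≡ K + 2 [MOD 2 * K]) (G : Polynomial ℤ)
    (hG : (X ^ 2 - X + 1) * G = X ^ n - 1) :
    (2 + lucas K) ∣ res (X ^ m - X + 1) G :=
  stmt_11_general n m K h6 h2K hmod G hG
end

section
/- Let n = 2·3^s with s ≥ 2, and let d be a divisor of 2·3^{s-1} with d ≠ 6. Suppose m - 2 ∈ {n/3, 2n/3}. Then |Res(t^m - t + 1, Φ_d)| = |Res(Φ₆, Φ_d)|. -/
/-!
Both choices of `m` make `m - 2` a multiple of `n / 3 = 2 * 3 ^ (s - 1)`, hence of `d`, so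
`Φ_d ∣ X ^ d - 1 ∣ X ^ (m - 2) - 1` and `X ^ m - X + 1 ≡ X ^ 2 - X + 1 = Φ₆` modulo `Φ_d`.
For monic `g`, `Res(g, f)` only depends on `f` modulo `g`: adding a multiple of `g` to `f` is a
column operation on a Sylvester matrix taken large enough, and enlarging that matrix does not
change the determinant because the leading coefficient of `g` is `1`.
-/

open Polynomial

lemma sylvester_eq_reindex_transpose (f g : ℤ[X]) :
    _root_.sylvester f g = (Polynomial.sylvester g f g.natDegree f.natDegree).transpose.reindex
      (finCongr (add_comm _ _)) (finCongr (add_comm _ _)) := by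
  ext i j
  obtain ⟨i, rfl⟩ := (finCongr (add_comm _ _)).surjective i
  induction i using Fin.addCases
  all_goals
    simp only [_root_.sylvester, Polynomial.sylvester, Matrix.reindex_apply, Matrix.submatrix_apply,
      Matrix.transpose_apply, Matrix.of_apply, Set.mem_Icc, finCongr_apply, finCongr_symm,
      Fin.cast_cast, Fin.cast_eq_self, Fin.val_cast, Fin.val_castAdd, Fin.cast_natAdd,
      Fin.val_addNat, Fin.addCases_left, Fin.addCases_right, Fin.cast_addNat, Fin.is_lt,
      add_lt_iff_neg_right, not_lt_zero, add_tsub_cancel_right, ↓reduceIte]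
    split_ifs <;> first | rfl | omega | (apply coeff_eq_zero_of_natDegree_lt; omega)

lemma res_eq_resultant (f g : ℤ[X]) : res f g = resultant g f := by
  rw [res, sylvester_eq_reindex_transpose, Matrix.det_reindex_self, Matrix.det_transpose,
    resultant]

section

variable {R : Type*} [CommRing R]

lemma Polynomial.Monic.resultant_eq_of_natDegree_le_s13 {g : R[X]} (hg : g.Monic) {f : R[X]} {n : ℕ}
    (hf : f.natDegree ≤ n) :
    resultant g f g.natDegree n = resultant g f := by
  obtain ⟨k, rfl⟩ := Nat.exists_eq_add_of_le hf
  rw [resultant_add_right_deg _ _ _ _ _ le_rfl, hg.coeff_natDegree, one_pow, one_mul]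

lemma Polynomial.Monic.resultant_eq_of_dvd_sub {g : R[X]} (hg : g.Monic) {f₁ f₂ : R[X]}
    (h : g ∣ f₁ - f₂) :
    resultant g f₁ = resultant g f₂ := by
  obtain ⟨p, hp⟩ := h
  have hf₁ : f₁ = f₂ + g * p := by rw [← hp]; ring
  set n := f₁.natDegree + f₂.natDegree + p.natDegree + g.natDegree
  rw [← hg.resultant_eq_of_natDegree_le_s13 (n := n) (by omega),
    ← hg.resultant_eq_of_natDegree_le_s13 (f := f₂) (n := n) (by omega), hf₁,
    resultant_add_mul_right _ _ _ _ _ (by omega) le_rfl]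

lemma cyclotomic_dvd_X_pow_sub_X_pow {d k : ℕ} (hd : d ∣ k) (j : ℕ) :
    cyclotomic d R ∣ X ^ (j + k) - X ^ j := by
  rw [pow_add, ← mul_sub_one]
  exact ((cyclotomic.dvd_X_pow_sub_one d R).trans (dvd_pow_sub_one_of_dvd hd)).mul_left _

end

theorem stmt_13_general (s n m : ℕ) (hs : 2 ≤ s) (hn : n = 2 * 3 ^ s)
    (hm2 : m - 2 = n / 3 ∨ m - 2 = 2 * n / 3)
    (d : ℕ) (hd : d ∣ 2 * 3 ^ (s - 1)) :
    |res (X ^ m - X + 1) (cyclotomic d ℤ)| = |res (cyclotomic 6 ℤ) (cyclotomic d ℤ)| := by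
  obtain ⟨t, rfl⟩ : ∃ t, s = t + 1 := ⟨s - 1, by omega⟩
  rw [pow_succ] at hn
  rw [Nat.add_sub_cancel] at hd
  have h3t : 0 < 3 ^ t := by positivity
  obtain ⟨k, rfl⟩ : ∃ k, m = k + 2 := ⟨m - 2, by omega⟩
  have hdk : d ∣ k := hd.trans <| by
    rcases hm2 with h | h
    · exact ⟨1, by omega⟩
    · exact ⟨2, by omega⟩
  have hdvd : cyclotomic d ℤ ∣ X ^ (k + 2) - X + 1 - cyclotomic 6 ℤ := by
    rw [cyclotomic_six, add_comm k]
    convert cyclotomic_dvd_X_pow_sub_X_pow hdk 2 using 1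
    ring
  rw [res_eq_resultant, res_eq_resultant, (cyclotomic.monic d ℤ).resultant_eq_of_dvd_sub hdvd]

theorem stmt_13 (s n m : ℕ) (hs : 2 ≤ s) (hn : n = 2 * 3 ^ s) (hm : 0 < m)
    (hm2 : m - 2 = n / 3 ∨ m - 2 = 2 * n / 3)
    (d : ℕ) (hd : d ∣ 2 * 3 ^ (s - 1)) (hd6 : d ≠ 6) :
    |res (X ^ m - X + 1) (cyclotomic d ℤ)| = |res (cyclotomic 6 ℤ) (cyclotomic d ℤ)| :=
  stmt_13_general s n m hs hn hm2 d hd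
end

section
/- Let η be a primitive sixth root of unity, let ε ∈ {2, 4}, and let β₁, β₂ be the roots of P(X) = η^ε X² - X + 1 in ℂ. Then |β₁|·|β₂| = 1, and max(|β₁|, |β₂|) > 3^{1/3}. -/
/-!
Put `ω = η ^ ε`, a primitive cube root of unity, so `‖ω‖ = 1`. Vieta gives `ω β₁ β₂ = 1`, whence
`‖β₁‖ ‖β₂‖ = 1`, and `ω² (β₁ - β₂)² = 1 - 4ω`, whence `‖β₁ - β₂‖⁴ = ‖1 - 4ω‖² = 21`. With
`m = max ‖β₁‖ ‖β₂‖ ≥ 1` the other modulus is `m⁻¹`, so `21 ≤ (m + m⁻¹)⁴`. For `c = 3^{1/3}` one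
checks `(c + c⁻¹)⁴ < 21`, and `t ↦ t + t⁻¹` is increasing on `[1, ∞)`, so `m > c`.
-/

open ComplexConjugate

section QuadraticRoots

variable {a β₁ β₂ : ℂ}

theorem mul_add_eq_one_of_roots (h₁ : a * β₁ ^ 2 - β₁ + 1 = 0) (h₂ : a * β₂ ^ 2 - β₂ + 1 = 0)
    (hne : β₁ ≠ β₂) : a * (β₁ + β₂) = 1 := by
  have h : (a * (β₁ + β₂) - 1) * (β₁ - β₂) = 0 := by linear_combination h₁ - h₂
  exact sub_eq_zero.mp ((mul_eq_zero.mp h).resolve_right (sub_ne_zero.mpr hne))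

theorem mul_mul_eq_one_of_roots (h₁ : a * β₁ ^ 2 - β₁ + 1 = 0) (h₂ : a * β₂ ^ 2 - β₂ + 1 = 0)
    (hne : β₁ ≠ β₂) : a * (β₁ * β₂) = 1 := by
  linear_combination β₁ * mul_add_eq_one_of_roots h₁ h₂ hne - h₁

theorem sq_mul_sub_sq_of_roots (h₁ : a * β₁ ^ 2 - β₁ + 1 = 0) (h₂ : a * β₂ ^ 2 - β₂ + 1 = 0)
    (hne : β₁ ≠ β₂) : a ^ 2 * (β₁ - β₂) ^ 2 = 1 - 4 * a := by
  linear_combination (a * (β₁ + β₂) + 1) * mul_add_eq_one_of_roots h₁ h₂ hne -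
    4 * a * mul_mul_eq_one_of_roots h₁ h₂ hne

theorem norm_mul_norm_eq_one_of_roots (h₁ : a * β₁ ^ 2 - β₁ + 1 = 0)
    (h₂ : a * β₂ ^ 2 - β₂ + 1 = 0) (hne : β₁ ≠ β₂) (ha : ‖a‖ = 1) : ‖β₁‖ * ‖β₂‖ = 1 := by
  simpa [ha] using congrArg norm (mul_mul_eq_one_of_roots h₁ h₂ hne)

theorem norm_sub_sq_eq_of_roots (h₁ : a * β₁ ^ 2 - β₁ + 1 = 0)
    (h₂ : a * β₂ ^ 2 - β₂ + 1 = 0) (hne : β₁ ≠ β₂) (ha : ‖a‖ = 1) :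
    ‖β₁ - β₂‖ ^ 2 = ‖1 - 4 * a‖ := by
  simpa [ha] using congrArg norm (sq_mul_sub_sq_of_roots h₁ h₂ hne)

end QuadraticRoots

theorem IsPrimitiveRoot.norm_one_sub_four_mul_sq_eq {ω : ℂ} (hω : IsPrimitiveRoot ω 3) :
    ‖1 - 4 * ω‖ ^ 2 = 21 := by
  have hcyc : 1 + ω + ω ^ 2 = 0 := by
    simpa [Finset.sum_range_succ] using hω.geom_sum_eq_zero (by norm_num)
  have hconj : conj ω = ω ^ 2 := by
    rw [← Complex.inv_eq_conj (hω.norm'_eq_one (by norm_num)), inv_eq_of_mul_eq_one_right]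
    rw [← pow_succ', hω.pow_eq_one]
  have h : ((‖1 - 4 * ω‖ ^ 2 : ℝ) : ℂ) = 21 := by
    push_cast
    rw [← Complex.mul_conj', map_sub, map_mul, hconj, map_one, map_ofNat]
    linear_combination -4 * hcyc + 16 * hω.pow_eq_one
  exact_mod_cast h

theorem one_le_max_of_mul_eq_one {A B : ℝ} (hA : 0 ≤ A) (hAB : A * B = 1) : 1 ≤ max A B := by
  by_contra! h
  nlinarith [max_lt_iff.mp h]

theorem add_eq_max_add_inv_max {A B : ℝ} (hAB : A * B = 1) :
    A + B = max A B + (max A B)⁻¹ := by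
  rcases le_total A B with h | h
  · rw [max_eq_right h, eq_inv_of_mul_eq_one_left hAB]; ring
  · rw [max_eq_left h, eq_inv_of_mul_eq_one_right hAB]

theorem add_inv_le_add_inv_of_one_le {m c : ℝ} (hm : 1 ≤ m) (hmc : m ≤ c) :
    m + m⁻¹ ≤ c + c⁻¹ := by
  have hc : 0 < c := by linarith
  have key : c + c⁻¹ - (m + m⁻¹) = (c - m) * (1 - (m * c)⁻¹) := by field_simp; ring
  have : (m * c)⁻¹ ≤ 1 := inv_le_one_of_one_le₀ (one_le_mul_of_one_le_of_one_le hm (hm.trans hmc))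
  nlinarith

theorem cbrt_three_add_inv_pow_four_lt :
    ((3 : ℝ) ^ ((1 : ℝ) / 3) + ((3 : ℝ) ^ ((1 : ℝ) / 3))⁻¹) ^ 4 < 21 := by
  set c : ℝ := (3 : ℝ) ^ ((1 : ℝ) / 3)
  have hc3 : c ^ 3 = 3 := by
    rw [← Real.rpow_natCast, ← Real.rpow_mul (by norm_num)]; norm_num
  have hc : 0 < c := by positivity
  have hlo : 1.36 < c := by nlinarith [sq_nonneg (c - 1.36)]
  have hhi : c < 1.5 := by nlinarith [sq_nonneg (c - 1.5)]
  have hpoly : (c ^ 2 + 1) ^ 4 - 21 * c ^ 4 = 13 * c ^ 2 - 45 * c + 37 := by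
    linear_combination (c ^ 5 + 4 * c ^ 3 + 3 * c ^ 2 - 15 * c + 12) * hc3
  -- the roots of `13 t² - 45 t + 37` are `≈ 1.344` and `≈ 2.117`
  have hneg : 13 * c ^ 2 - 45 * c + 37 < 0 := by nlinarith
  rw [show c + c⁻¹ = (c ^ 2 + 1) / c by field_simp, div_pow, div_lt_iff₀ (by positivity)]
  linarith

theorem stmt_16 (η : ℂ) (hη : IsPrimitiveRoot η 6) (ε : ℕ) (hε : ε = 2 ∨ ε = 4)
    (β₁ β₂ : ℂ) (h₁ : η ^ ε * β₁ ^ 2 - β₁ + 1 = 0)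
    (h₂ : η ^ ε * β₂ ^ 2 - β₂ + 1 = 0) (hne : β₁ ≠ β₂) :
    ‖β₁‖ * ‖β₂‖ = 1 ∧
      (3 : ℝ) ^ ((1 : ℝ) / 3) < max ‖β₁‖ ‖β₂‖ := by
  have hω : IsPrimitiveRoot (η ^ ε) 3 := by
    have h2 : IsPrimitiveRoot (η ^ 2) 3 := hη.pow (by norm_num) rfl
    rcases hε with rfl | rfl
    · exact h2
    · simpa [← pow_mul] using h2.pow_of_coprime 2 (by norm_num)
  have hnorm : ‖η ^ ε‖ = 1 := hω.norm'_eq_one (by norm_num)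
  have hprod := norm_mul_norm_eq_one_of_roots h₁ h₂ hne hnorm
  refine ⟨hprod, ?_⟩
  have hdisc : ‖β₁ - β₂‖ ^ 4 = 21 := by
    rw [show 4 = 2 * 2 from rfl, pow_mul, norm_sub_sq_eq_of_roots h₁ h₂ hne hnorm,
      hω.norm_one_sub_four_mul_sq_eq]
  have hm : 1 ≤ max ‖β₁‖ ‖β₂‖ := one_le_max_of_mul_eq_one (norm_nonneg _) hprod
  have hsum : ‖β₁ - β₂‖ ≤ max ‖β₁‖ ‖β₂‖ + (max ‖β₁‖ ‖β₂‖)⁻¹ :=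
    (norm_sub_le _ _).trans (add_eq_max_add_inv_max hprod).le
  by_contra! hle
  have := pow_le_pow_left₀ (norm_nonneg _) (hsum.trans (add_inv_le_add_inv_of_one_le hm hle)) 4
  linarith [cbrt_three_add_inv_pow_four_lt]
end

section
/- Suppose n = 2^a·3^s·v and m - 2 = 2^b·3^r·u with a, b, r, s, u, v ≥ 1, gcd(uv, 6) = 1, and v ∣ u. If a ≥ b + 2, or s ≥ r + 2, or (a = b + 1 and s = r + 1), then there exist integers n₁ and m₁ such that n₁ ∣ n, n₁ < n, 2 < m₁ < n₁, m₁ ≡ m (mod n₁), and m₁ ≡ 2 (mod 6). -/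
/-!
Since `2^b ∥ m - 2` and `3^r ∥ m - 2`, the modulus `n₁ = 2^(b+1)·3`, `2·3^(r+1)` or
`2^(b+1)·3^r` (according to the case) is a multiple of 6 that does not divide `m - 2`, and the
case hypothesis makes it a proper divisor of `n`. Then `m₁ = m % n₁` works: it is `≡ 2 (mod 6)`
because `6 ∣ n₁`, and it is not `2` because `n₁ ∤ m - 2`.
-/

lemma pow_succ_not_dvd_pow_mul {p k c : ℕ} (hp : 0 < p) (hc : ¬ p ∣ c) :
    ¬ p ^ (k + 1) ∣ p ^ k * c := by
  rw [pow_succ]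
  exact fun h => hc (Nat.dvd_of_mul_dvd_mul_left (pow_pos hp k) h)

lemma lt_mod_of_modEq_of_dvd {m c d n₁ : ℕ} (hcd : c < d) (hd : d ∣ n₁)
    (hm : m ≡ c [MOD d]) (hne : ¬ m ≡ c [MOD n₁]) : c < m % n₁ := by
  have hmod : m % n₁ ≡ c [MOD d] := ((Nat.mod_modEq m n₁).of_dvd hd).trans hm
  have hc : c ≤ m % n₁ := by
    have := Nat.mod_le (m % n₁) d
    rw [hmod, Nat.mod_eq_of_lt hcd] at this
    exact this
  refine lt_of_le_of_ne hc fun h => hne ?_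
  rw [h]
  exact (Nat.mod_modEq m n₁).symm

lemma exists_modEq_two_of_mul_dvd {n m n₁ k : ℕ} (hn : 0 < n) (hk : 1 < k)
    (hdvd : n₁ * k ∣ n) (h6 : 6 ∣ n₁) (hm : m ≡ 2 [MOD 6]) (hne : ¬ m ≡ 2 [MOD n₁]) :
    ∃ n₁ m₁ : ℕ, n₁ ∣ n ∧ n₁ < n ∧ 2 < m₁ ∧ m₁ < n₁ ∧
      m₁ ≡ m [MOD n₁] ∧ m₁ ≡ 2 [MOD 6] := by
  have hn₁ : 0 < n₁ := Nat.pos_of_mul_pos_right (Nat.pos_of_dvd_of_pos hdvd hn)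
  have hlt : n₁ < n :=
    (lt_mul_of_one_lt_right hn₁ hk).trans_le (Nat.le_of_dvd hn hdvd)
  exact ⟨n₁, m % n₁, dvd_of_mul_right_dvd hdvd, hlt,
    lt_mod_of_modEq_of_dvd (by norm_num) h6 hm hne, Nat.mod_lt m hn₁,
    Nat.mod_modEq m n₁, ((Nat.mod_modEq m n₁).of_dvd h6).trans hm⟩

theorem stmt_17_general (n m a b r s u v : ℕ)
    (ha : 1 ≤ a) (hb : 1 ≤ b) (hr : 1 ≤ r) (hs : 1 ≤ s)
    (hm : 2 ≤ m) (hmn : m < n)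
    (hneq : n = 2 ^ a * 3 ^ s * v) (hmeq : m - 2 = 2 ^ b * 3 ^ r * u)
    (hgcd : Nat.gcd (u * v) 6 = 1)
    (hcase : a ≥ b + 2 ∨ s ≥ r + 2 ∨ (a = b + 1 ∧ s = r + 1)) :
    ∃ n₁ m₁ : ℕ, n₁ ∣ n ∧ n₁ < n ∧ 2 < m₁ ∧ m₁ < n₁ ∧
      m₁ ≡ m [MOD n₁] ∧ m₁ ≡ 2 [MOD 6] := by
  have hu6 : Nat.Coprime u 6 := Nat.Coprime.coprime_dvd_left (dvd_mul_right u v) hgcd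
  have h2 : ¬ 2 ^ (b + 1) ∣ m - 2 := by
    rw [hmeq, mul_assoc]
    refine pow_succ_not_dvd_pow_mul two_pos
      ((Nat.Prime.coprime_iff_not_dvd Nat.prime_two).1 ?_)
    exact (Nat.Coprime.pow_right r (by norm_num)).mul_right
      (hu6.coprime_dvd_right (by norm_num)).symm
  have h3 : ¬ 3 ^ (r + 1) ∣ m - 2 := by
    rw [hmeq, mul_comm (2 ^ b), mul_assoc]
    refine pow_succ_not_dvd_pow_mul three_pos
      ((Nat.Prime.coprime_iff_not_dvd Nat.prime_three).1 ?_)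
    exact (Nat.Coprime.pow_right b (by norm_num)).mul_right
      (hu6.coprime_dvd_right (by norm_num)).symm
  have h6 : m ≡ 2 [MOD 6] := by
    refine ((Nat.modEq_iff_dvd' hm).2 ?_).symm
    rw [hmeq]
    have h23 : 2 * 3 ∣ 2 ^ b * 3 ^ r :=
      mul_dvd_mul (dvd_pow_self 2 (by omega)) (dvd_pow_self 3 (by omega))
    exact h23.mul_right u
  have reduce : ∀ n₁ k, 1 < k → n₁ * k ∣ n → 6 ∣ n₁ → ¬ n₁ ∣ m - 2 →
      ∃ n₁ m₁ : ℕ, n₁ ∣ n ∧ n₁ < n ∧ 2 < m₁ ∧ m₁ < n₁ ∧ m₁ ≡ m [MOD n₁] ∧ m₁ ≡ 2 [MOD 6] :=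
    fun n₁ k hk hdvd h6n₁ hnd => exists_modEq_two_of_mul_dvd (Nat.zero_lt_of_lt hmn) hk hdvd
      h6n₁ h6 fun h => hnd ((Nat.modEq_iff_dvd' hm).1 h.symm)
  subst hneq
  obtain ⟨b, rfl⟩ := Nat.exists_eq_add_of_le' hb
  obtain ⟨r, rfl⟩ := Nat.exists_eq_add_of_le' hr
  rcases hcase with hc | hc | ⟨rfl, rfl⟩
  · obtain ⟨i, rfl⟩ := Nat.exists_eq_add_of_le hc
    obtain ⟨j, rfl⟩ := Nat.exists_eq_add_of_le hs
    exact reduce (2 ^ (b + 1 + 1) * 3) 2 one_lt_two (Dvd.intro (2 ^ i * 3 ^ j * v) (by ring))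
      (Dvd.intro (2 ^ (b + 1)) (by ring)) fun h => h2 ((dvd_mul_right _ _).trans h)
  · obtain ⟨i, rfl⟩ := Nat.exists_eq_add_of_le ha
    obtain ⟨j, rfl⟩ := Nat.exists_eq_add_of_le hc
    exact reduce (2 * 3 ^ (r + 1 + 1)) 3 (by norm_num) (Dvd.intro (2 ^ i * 3 ^ j * v) (by ring))
      (Dvd.intro (3 ^ (r + 1)) (by ring)) fun h => h3 ((dvd_mul_left _ _).trans h)
  · exact reduce (2 ^ (b + 1 + 1) * 3 ^ (r + 1)) 3 (by norm_num) (Dvd.intro v (by ring))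
      (Dvd.intro (2 ^ (b + 1) * 3 ^ r) (by ring)) fun h => h2 ((dvd_mul_right _ _).trans h)

theorem stmt_17 (n m a b r s u v : ℕ)
    (ha : 1 ≤ a) (hb : 1 ≤ b) (hr : 1 ≤ r) (hs : 1 ≤ s) (hu : 1 ≤ u) (hv : 1 ≤ v)
    (hm : 2 ≤ m) (hmn : m < n)
    (hneq : n = 2 ^ a * 3 ^ s * v) (hmeq : m - 2 = 2 ^ b * 3 ^ r * u)
    (hgcd : Nat.gcd (u * v) 6 = 1) (hvu : v ∣ u)
    (hcase : a ≥ b + 2 ∨ s ≥ r + 2 ∨ (a = b + 1 ∧ s = r + 1)) :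
    ∃ n₁ m₁ : ℕ, n₁ ∣ n ∧ n₁ < n ∧ 2 < m₁ ∧ m₁ < n₁ ∧
      m₁ ≡ m [MOD n₁] ∧ m₁ ≡ 2 [MOD 6] :=
  stmt_17_general n m a b r s u v ha hb hr hs hm hmn hneq hmeq hgcd hcase
end
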